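/- Let d ≥ 5 and let G(z) be the generating series counting monomials in the 3d−7 formal generators of degrees: one generator of cohomological degree 2 (c₀(2)), one of degree 2 (c₂(0)), and for each k from 3 to d−1, generators c_k(0), c_{k−1}(1), c_{k−2}(2) of degrees 2(k−1), 2(k−1), 2(k−1) respectively (i.e., a generator c_k(j) has degree 2(k+j−1)). Let a_{2i} be the number of monomials of degree 2i in these generators. Then a_{2i} equals the stable Betti number b_{2i} of the Hilbert scheme of points (coefficient of z^{2i} in R(z) = (1−z²)^{-2} Π_{k=1}^{i−1} (1−z^{2k+2})^{-3}) for all i ≤ d−2, while a_{2(d−1)} = b_{2(d−1)} − 3 and a_{2d} = b_{2d} − 9. -/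

import Mathlib

/-!
STATEMENT 10: Let `d ≥ 5`.  The Pi–Shen generating set `Σ` consists of `3d−7` generators:
`c₀(2)` and `c₂(0)` of cohomological degree 2, and, for each `k ∈ {3,…,d−1}`, the
generators `c_k(0), c_{k−1}(1), c_{k−2}(2)`, each of degree `2(k−1)` (a generator `c_k(j)`
has degree `2(k+j−1)`).  Let `a_{2i}` be the number of monomials of degree `2i` in these
generators, i.e. the coefficient of `z^{2i}` in
`G(z) = Π_{c_k(j) ∈ Σ} (1 − z^{2(k+j−1)})^{-1}
      = (1−z²)^{-2} Π_{k=3}^{d−1} (1−z^{2(k−1)})^{-3}`,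
and let `b_{2i}` be the stable Betti number of the Hilbert scheme of points on `ℙ²`, the
coefficient of `z^{2i}` in `R(z) = (1−z²)^{-2} Π_{k≥1} (1−z^{2k+2})^{-3}`.  Then
`a_{2i} = b_{2i}` for `i ≤ d−2`, `a_{2(d−1)} = b_{2(d−1)} − 3`, and `a_{2d} = b_{2d} − 9`.

Each factor `(1−z^a)^{-1}` (`a ≥ 1`) is the geometric series `Σ_{l≥0} z^{al}`; the infinite
product in `R` is truncated at `k ≤ d`, which does not affect coefficients of `z^j`, `j ≤ 2d`.
-/

open PowerSeries

/-- The geometric series `(1 − z^a)^{-1} = Σ_{l≥0} z^{al}` in `ℤ[[z]]` (for `a ≥ 1`). -/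
noncomputable def geomSeries (a : ℕ) : PowerSeries ℤ :=
  PowerSeries.mk fun m => if a ∣ m then 1 else 0

/-- The generating series `G(z)` of monomials in the `3d−7` Pi–Shen generators: two
generators of degree 2 and, for `3 ≤ k ≤ d−1`, three generators of degree `2(k−1)`. -/
noncomputable def piShenG (d : ℕ) : PowerSeries ℤ :=
  geomSeries 2 ^ 2 * ∏ k ∈ Finset.Icc 3 (d - 1), geomSeries (2 * (k - 1)) ^ 3

/-- The stable Betti number generating series
`R(z) = (1−z²)^{-2} Π_{k≥1}(1−z^{2k+2})^{-3}` of the Hilbert schemes of points on `ℙ²`,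
truncated at `k ≤ d` (higher factors do not affect coefficients of `z^j` for `j ≤ 2d`). -/
noncomputable def stableBettiSeries (d : ℕ) : PowerSeries ℤ :=
  geomSeries 2 ^ 2 * ∏ k ∈ Finset.Icc 1 d, geomSeries (2 * k + 2) ^ 3

/-!
Both series share the factor `(1-z²)⁻² Π_{k ≤ d-3} (1-z^{2k+2})⁻³`; the truncated stable Betti
series has the three extra factors `(1-z^{2d-2})⁻³ (1-z^{2d})⁻³ (1-z^{2d+2})⁻³`, so
`G = R · ((1-u)(1-v)(1-w))³` with `u = z^{2d-2}`, `v = z^{2d}`, `w = z^{2d+2}`. Below degree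
`2d+1` that cube is `1 - 3u - 3v`, hence `a_{2i} = b_{2i} - 3 b_{2i-2d+2} - 3 b_{2i-2d}`
(with `b_j = 0` for `j < 0`), and the claims follow from `b₀ = 1`, `b₂ = 2`.
-/

section Divisibility

variable {R : Type*} [CommRing R] {p : R}

theorem dvd_prod_sub_one {ι : Type*} (s : Finset ι) {f : ι → R} (h : ∀ i ∈ s, p ∣ f i - 1) :
    p ∣ ∏ i ∈ s, f i - 1 := by
  classical
  induction s using Finset.induction_on with
  | empty => simp
  | insert a s ha ih =>
    rw [Finset.prod_insert ha,
      show f a * ∏ i ∈ s, f i - 1 = (f a - 1) * ∏ i ∈ s, f i + (∏ i ∈ s, f i - 1) by ring]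
    exact ((h a (Finset.mem_insert_self a s)).mul_right _).add
      (ih fun i hi => h i (Finset.mem_insert_of_mem hi))

theorem dvd_one_sub_mul_cube_sub {u v w : R} (hu : p ∣ u ^ 2) (huv : p ∣ u * v)
    (hv : p ∣ v ^ 2) (hw : p ∣ w) :
    p ∣ ((1 - u) * (1 - v) * (1 - w)) ^ 3 - (1 - 3 * u - 3 * v) := by
  rw [show ((1 - u) * (1 - v) * (1 - w)) ^ 3 - (1 - 3 * u - 3 * v)
      = u ^ 2 * ((3 - u) * (1 - 3 * v) + v ^ 2 * (3 - u) * (3 - v))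
        + v ^ 2 * ((3 - v) * (1 - 3 * u)) + u * v * 9
        + w * ((1 - u) ^ 3 * (1 - v) ^ 3 * (-3 + 3 * w - w ^ 2)) by ring]
  exact ((hu.mul_right _ |>.add (hv.mul_right _)).add (huv.mul_right _)).add (hw.mul_right _)

end Divisibility

theorem PowerSeries.coeff_mul_eq_of_X_pow_dvd_sub {R : Type*} [CommRing R] {N m : ℕ}
    (f : R⟦X⟧) {g h : R⟦X⟧} (hgh : X ^ N ∣ g - h) (hm : m < N) :
    coeff m (f * g) = coeff m (f * h) := by
  rw [← sub_eq_zero, ← map_sub, ← mul_sub]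
  exact X_pow_dvd_iff.mp (hgh.mul_left f) m hm

theorem coeff_geomSeries (a n : ℕ) : coeff n (geomSeries a) = if a ∣ n then 1 else 0 :=
  coeff_mk _ _

theorem X_pow_dvd_geomSeries_sub_one (a : ℕ) : (X : ℤ⟦X⟧) ^ a ∣ geomSeries a - 1 := by
  refine X_pow_dvd_iff.mpr fun m hm => ?_
  rw [map_sub, coeff_geomSeries, coeff_one]
  by_cases h0 : m = 0
  · simp [h0]
  · rw [if_neg h0, if_neg fun hdvd => h0 (Nat.eq_zero_of_dvd_of_lt hdvd hm), sub_zero]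

theorem geomSeries_mul_one_sub_X_pow {a : ℕ} (ha : 0 < a) : geomSeries a * (1 - X ^ a) = 1 := by
  ext n
  rw [mul_sub, mul_one, map_sub, coeff_mul_X_pow']
  by_cases han : a ≤ n
  · simp only [if_pos han, coeff_geomSeries, Nat.dvd_sub_iff_left han dvd_rfl, sub_self]
    rw [coeff_one, if_neg (by omega)]
  · have hlow := X_pow_dvd_iff.mp (X_pow_dvd_geomSeries_sub_one a) n (by omega)
    rwa [if_neg han, sub_zero, ← sub_eq_zero, ← map_sub]

theorem prod_Icc_three_geomSeries (n : ℕ) :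
    ∏ k ∈ Finset.Icc 3 (n + 2), geomSeries (2 * (k - 1)) ^ 3
      = ∏ k ∈ Finset.Icc 1 n, geomSeries (2 * k + 2) ^ 3 := by
  induction n with
  | zero => rfl
  | succ n ih =>
    rw [Finset.prod_Icc_succ_top (by omega), ih, Finset.prod_Icc_succ_top (by omega)]
    congr 3

theorem stableBettiSeries_eq_piShenG_mul {d : ℕ} (hd : 3 ≤ d) :
    stableBettiSeries d
      = piShenG d * (geomSeries (2 * d - 2) * geomSeries (2 * d) * geomSeries (2 * d + 2)) ^ 3 := by
  obtain ⟨n, rfl⟩ := Nat.exists_eq_add_of_le' hd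
  rw [stableBettiSeries, piShenG, show n + 3 - 1 = n + 2 by omega, prod_Icc_three_geomSeries,
    Finset.prod_Icc_succ_top (by omega), Finset.prod_Icc_succ_top (by omega),
    Finset.prod_Icc_succ_top (by omega), show 2 * (n + 3) - 2 = 2 * (n + 1) + 2 by omega,
    show 2 * (n + 3) = 2 * (n + 2) + 2 by omega]
  ring

theorem piShenG_eq_stableBettiSeries_mul {d : ℕ} (hd : 3 ≤ d) :
    piShenG d = stableBettiSeries d
      * ((1 - X ^ (2 * d - 2)) * (1 - X ^ (2 * d)) * (1 - X ^ (2 * d + 2))) ^ 3 := by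
  have hinv : (geomSeries (2 * d - 2) * geomSeries (2 * d) * geomSeries (2 * d + 2))
      * ((1 - X ^ (2 * d - 2)) * (1 - X ^ (2 * d)) * (1 - X ^ (2 * d + 2))) = 1 := by
    calc _ = (geomSeries (2 * d - 2) * (1 - X ^ (2 * d - 2))) * (geomSeries (2 * d)
          * (1 - X ^ (2 * d))) * (geomSeries (2 * d + 2) * (1 - X ^ (2 * d + 2))) := by ring
      _ = 1 := by
        rw [geomSeries_mul_one_sub_X_pow (by omega), geomSeries_mul_one_sub_X_pow (by omega),
          geomSeries_mul_one_sub_X_pow (by omega), one_mul, one_mul]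
  rw [stableBettiSeries_eq_piShenG_mul hd, mul_assoc, ← mul_pow, hinv, one_pow, mul_one]

theorem coeff_piShenG {d m : ℕ} (hd : 3 ≤ d) (hm : m ≤ 2 * d) :
    coeff m (piShenG d) = coeff m (stableBettiSeries d)
      - 3 * (if 2 * d - 2 ≤ m then coeff (m - (2 * d - 2)) (stableBettiSeries d) else 0)
      - 3 * (if 2 * d ≤ m then coeff (m - 2 * d) (stableBettiSeries d) else 0) := by
  have htrunc : (X : ℤ⟦X⟧) ^ (2 * d + 1) ∣
      ((1 - X ^ (2 * d - 2)) * (1 - X ^ (2 * d)) * (1 - X ^ (2 * d + 2))) ^ 3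
        - (1 - 3 * X ^ (2 * d - 2) - 3 * X ^ (2 * d)) := by
    apply dvd_one_sub_mul_cube_sub <;> (try rw [← pow_mul]) <;> (try rw [← pow_add]) <;>
      exact pow_dvd_pow X (by omega)
  rw [piShenG_eq_stableBettiSeries_mul hd, coeff_mul_eq_of_X_pow_dvd_sub _ htrunc (by omega)]
  rw [show ∀ f u v : ℤ⟦X⟧, f * (1 - 3 * u - 3 * v) = f - C 3 * (f * u) - C 3 * (f * v) by
      intro f u v; rw [map_ofNat]; ring,
    map_sub, map_sub, coeff_C_mul, coeff_C_mul, coeff_mul_X_pow', coeff_mul_X_pow']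

theorem coeff_stableBettiSeries_of_lt_four (d : ℕ) {m : ℕ} (hm : m < 4) :
    coeff m (stableBettiSeries d) = coeff m (geomSeries 2 ^ 2) := by
  have hprod : (X : ℤ⟦X⟧) ^ 4 ∣ ∏ k ∈ Finset.Icc 1 d, geomSeries (2 * k + 2) ^ 3 - 1 := by
    refine dvd_prod_sub_one _ fun k hk => ?_
    have h4 : 4 ≤ 2 * k + 2 := by linarith [(Finset.mem_Icc.mp hk).1]
    exact ((pow_dvd_pow X h4).trans (X_pow_dvd_geomSeries_sub_one _)).trans
      (by simpa only [one_pow] using sub_dvd_pow_sub_pow (geomSeries _) 1 3)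
  rw [stableBettiSeries, coeff_mul_eq_of_X_pow_dvd_sub _ hprod hm, mul_one]

theorem coeff_zero_stableBettiSeries (d : ℕ) : coeff 0 (stableBettiSeries d) = 1 := by
  rw [coeff_stableBettiSeries_of_lt_four d (by norm_num), sq, coeff_mul]
  simp [coeff_geomSeries]

theorem coeff_two_stableBettiSeries (d : ℕ) : coeff 2 (stableBettiSeries d) = 2 := by
  rw [coeff_stableBettiSeries_of_lt_four d (by norm_num), sq, coeff_mul]
  simp [Finset.Nat.antidiagonal_succ, coeff_geomSeries]

/-- The monomial counts `a_{2i}` in the Pi–Shen generators equal the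
stable Betti numbers `b_{2i}` of the Hilbert schemes of points for `i ≤ d−2`, while
`a_{2(d−1)} = b_{2(d−1)} − 3` and `a_{2d} = b_{2d} − 9`. -/
theorem stmt10 (d : ℕ) (hd : 5 ≤ d) :
    (∀ i : ℕ, i ≤ d - 2 →
      PowerSeries.coeff (R := ℤ) (2 * i) (piShenG d)
        = PowerSeries.coeff (R := ℤ) (2 * i) (stableBettiSeries d)) ∧
    PowerSeries.coeff (R := ℤ) (2 * (d - 1)) (piShenG d)
      = PowerSeries.coeff (R := ℤ) (2 * (d - 1)) (stableBettiSeries d) - 3 ∧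
    PowerSeries.coeff (R := ℤ) (2 * d) (piShenG d)
      = PowerSeries.coeff (R := ℤ) (2 * d) (stableBettiSeries d) - 9 := by
  have hd3 : 3 ≤ d := by omega
  refine ⟨fun i hi => ?_, ?_, ?_⟩
  · rw [coeff_piShenG hd3 (by omega), if_neg (by omega), if_neg (by omega)]
    ring
  · rw [coeff_piShenG hd3 (by omega), if_pos (by omega), if_neg (by omega),
      show 2 * (d - 1) - (2 * d - 2) = 0 by omega, coeff_zero_stableBettiSeries]
    ring
  · rw [coeff_piShenG hd3 le_rfl, if_pos (by omega), if_pos le_rfl,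
      show 2 * d - (2 * d - 2) = 2 by omega, Nat.sub_self, coeff_two_stableBettiSeries,
      coeff_zero_stableBettiSeries]
    ring
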